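/- Let M1, M2 be integers with 4 ≤ M1 ≤ M2. Then the average effective resistance of the two-dimensional toroidal grid satisfies R_ave(T_{M1,M2}) ≤ (1/(2π))·log M2 + (1/12)·(M2/M1) + 1, where log denotes the natural logarithm. -/

import Mathlib

/-!
The torus Laplacian has eigenvalues `λ_i + μ_j`, where `λ_i = 2 - 2 cos (2πi/M1) = 4 sin² (πi/M1)`
and `μ_j` are the eigenvalues of the cycles `C_M1` and `C_M2` (`cycleEigenvalue`). Each row sum over `j` is computed exactly by
Parseval's identity for the discrete Fourier transform: with `V_j = Σ_k c_k ζ^(jk)` chosen so that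
`(w - ζ^j) V_j` is constant, `Σ_j 1/|w - ζ^j|²` becomes `Σ_k |c_k|²`. For `i = 0` this gives
`Σ_{j≠0} 1/μ_j = (M2² - 1)/12`; for `i ≠ 0`, writing `λ_i + 2 = w + w⁻¹` with `w > 1`, it gives
`M2 (w^M2 + 1)/((w - w⁻¹)(w^M2 - 1)) ≤ M2/(2√λ_i) + 1/λ_i`. Summing over `i`, the second terms
add up to `(M1² - 1)/12`, and `1/sin x ≤ 1/x + 1` for `0 < x ≤ 2` bounds `Σ_i 1/sin (πi/M1)` by a
harmonic sum, which produces the logarithm.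
-/

open Real Finset

/-- Average effective resistance of the two-dimensional toroidal grid `T_{M1,M2}`. -/
noncomputable def Rave2 (M1 M2 : ℕ) : ℝ :=
  (1 / ((M1 : ℝ) * M2)) * ∑ i ∈ Finset.range M1, ∑ j ∈ Finset.range M2,
    if i = 0 ∧ j = 0 then 0
    else 1 / (4 - 2 * Real.cos (2 * Real.pi * i / M1) - 2 * Real.cos (2 * Real.pi * j / M2))

open Complex (normSq)

namespace IsPrimitiveRoot

variable {M : ℕ}

theorem sum_pow_mul_mul_inv_pow_mul {K : Type*} [Field K] {ζ : K} (hζ : IsPrimitiveRoot ζ M)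
    {k l : ℕ} (hk : k < M) (hl : l < M) :
    ∑ j ∈ range M, ζ ^ (j * k) * ζ⁻¹ ^ (j * l) = if k = l then (M : K) else 0 := by
  have hζ0 : ζ ≠ 0 := hζ.ne_zero (by omega)
  have hpow (j : ℕ) : ζ ^ (j * k) * ζ⁻¹ ^ (j * l) = (ζ ^ k / ζ ^ l) ^ j := by
    rw [div_eq_mul_inv, mul_pow, ← inv_pow, ← pow_mul, ← pow_mul]
    ring
  simp_rw [hpow]
  split_ifs with hkl
  · simp [hkl, hζ0]
  · have hx1 : ζ ^ k / ζ ^ l ≠ 1 := fun h =>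
      hkl (hζ.pow_inj hk hl ((div_eq_one_iff_eq (pow_ne_zero _ hζ0)).mp h))
    have hxM : (ζ ^ k / ζ ^ l) ^ M = 1 := by
      rw [div_pow, ← pow_mul, ← pow_mul, mul_comm k, mul_comm l, pow_mul, pow_mul,
        hζ.pow_eq_one, one_pow, one_pow, div_one]
    rw [geom_sum_eq hx1, hxM, sub_self, zero_div]

theorem sum_normSq_sum_mul_pow {ζ : ℂ} (hζ : IsPrimitiveRoot ζ M) (c : ℕ → ℂ) :
    ∑ j ∈ range M, normSq (∑ k ∈ range M, c k * ζ ^ (j * k)) =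
      M * ∑ k ∈ range M, normSq (c k) := by
  rcases M.eq_zero_or_pos with rfl | hM
  · simp
  have hconj : (starRingEnd ℂ) ζ = ζ⁻¹ := (Complex.inv_eq_conj (hζ.norm'_eq_one hM.ne')).symm
  apply Complex.ofReal_injective
  push_cast
  simp_rw [← Complex.mul_conj, map_sum, map_mul, map_pow, hconj, sum_mul_sum]
  calc ∑ j ∈ range M, ∑ k ∈ range M, ∑ l ∈ range M,
        c k * ζ ^ (j * k) * ((starRingEnd ℂ) (c l) * ζ⁻¹ ^ (j * l))
      = ∑ k ∈ range M, ∑ l ∈ range M, c k * (starRingEnd ℂ) (c l) *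
          ∑ j ∈ range M, ζ ^ (j * k) * ζ⁻¹ ^ (j * l) := by
        rw [sum_comm]
        refine sum_congr rfl fun k _ => ?_
        rw [sum_comm]
        refine sum_congr rfl fun l _ => ?_
        rw [mul_sum]
        exact sum_congr rfl fun j _ => by ring
    _ = M * ∑ k ∈ range M, c k * (starRingEnd ℂ) (c k) := by
        rw [mul_sum]
        refine sum_congr rfl fun k hk => ?_
        rw [sum_eq_single_of_mem k hk fun l hl hlk => by
          rw [hζ.sum_pow_mul_mul_inv_pow_mul (mem_range.mp hk) (mem_range.mp hl),
            if_neg (Ne.symm hlk), mul_zero]]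
        rw [hζ.sum_pow_mul_mul_inv_pow_mul (mem_range.mp hk) (mem_range.mp hk), if_pos rfl]
        ring

end IsPrimitiveRoot

theorem one_sub_mul_sum_range_mul_pow {R : Type*} [CommRing R] (x : R) (n : ℕ) :
    (1 - x) * ∑ k ∈ range n, (k : R) * x ^ k = x * ∑ k ∈ range n, x ^ k - n * x ^ n := by
  induction n with
  | zero => simp
  | succ n ih =>
    rw [sum_range_succ, sum_range_succ, mul_add, ih]
    push_cast
    ring

noncomputable def cycleEigenvalue (M j : ℕ) : ℝ := 2 - 2 * cos (2 * π * j / M)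

theorem normSq_ofReal_sub_exp_pow (w : ℝ) (M j : ℕ) :
    normSq (w - Complex.exp (2 * π * Complex.I / M) ^ j) =
      w ^ 2 - 2 * w * cos (2 * π * j / M) + 1 := by
  rw [← Complex.exp_nat_mul, show (j : ℂ) * (2 * π * Complex.I / M) = (2 * π * j / M : ℝ) *
    Complex.I by push_cast; ring, Complex.normSq_apply, Complex.sub_re, Complex.sub_im,
    Complex.ofReal_re, Complex.ofReal_im, Complex.exp_ofReal_mul_I_re,
    Complex.exp_ofReal_mul_I_im]
  linear_combination sin_sq_add_cos_sq (2 * π * j / M)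

theorem cycleEigenvalue_eq_normSq (M j : ℕ) :
    cycleEigenvalue M j = normSq (1 - Complex.exp (2 * π * Complex.I / M) ^ j) := by
  rw [cycleEigenvalue, ← Complex.ofReal_one, normSq_ofReal_sub_exp_pow]
  ring

theorem sum_range_cast_id (n : ℕ) : ∑ k ∈ range n, (k : ℝ) = n * (n - 1) / 2 := by
  induction n with
  | zero => simp
  | succ n ih => rw [sum_range_succ, ih]; push_cast; ring

theorem sum_range_cast_sq (n : ℕ) :
    ∑ k ∈ range n, (k : ℝ) ^ 2 = n * (n - 1) * (2 * n - 1) / 6 := by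
  induction n with
  | zero => simp
  | succ n ih => rw [sum_range_succ, ih]; push_cast; ring

theorem sum_Ico_inv_cycleEigenvalue {M : ℕ} (hM : 0 < M) :
    ∑ j ∈ Ico 1 M, 1 / cycleEigenvalue M j = ((M : ℝ) ^ 2 - 1) / 12 := by
  set ζ := Complex.exp (2 * π * Complex.I / M)
  have hζ : IsPrimitiveRoot ζ M := Complex.isPrimitiveRoot_exp M hM.ne'
  -- `V j = -M / (1 - ζ ^ j)` for `j ≠ 0`, expanded as a differentiated geometric sum
  set V : ℕ → ℂ := fun j => ∑ k ∈ range M, (k : ℂ) * ζ ^ (j * k)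
  have hterm : ∀ j ∈ Ico 1 M, 1 / cycleEigenvalue M j = normSq (V j) / M ^ 2 := by
    intro j hj
    obtain ⟨hj1, hjM⟩ := mem_Ico.mp hj
    have hx1 : ζ ^ j ≠ 1 := hζ.pow_ne_one_of_pos_of_lt (by omega) hjM
    have hxM : (ζ ^ j) ^ M = 1 := by rw [← pow_mul, mul_comm, pow_mul, hζ.pow_eq_one, one_pow]
    have hV : (1 - ζ ^ j) * V j = -M := by
      have hgeom : ∑ k ∈ range M, (ζ ^ j) ^ k = 0 := by
        rw [geom_sum_eq hx1, hxM, sub_self, zero_div]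
      have := one_sub_mul_sum_range_mul_pow (ζ ^ j) M
      rw [hgeom, hxM] at this
      simp only [V, pow_mul]
      linear_combination this
    have hprod : cycleEigenvalue M j * normSq (V j) = M ^ 2 := by
      rw [cycleEigenvalue_eq_normSq, ← Complex.normSq_mul, hV, Complex.normSq_neg,
        Complex.normSq_natCast, sq]
    have hpos : cycleEigenvalue M j ≠ 0 := by
      rw [cycleEigenvalue_eq_normSq, Ne, Complex.normSq_eq_zero, sub_eq_zero]
      exact Ne.symm hx1
    field_simp
    linarith
  have hsplit : ∑ j ∈ Ico 1 M, normSq (V j) = ∑ j ∈ range M, normSq (V j) - normSq (V 0) := by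
    rw [range_eq_Ico, sum_eq_sum_Ico_succ_bot hM]
    ring
  have hV0 : V 0 = ((∑ k ∈ range M, (k : ℝ) : ℝ) : ℂ) := by simp [V]
  have hparseval := hζ.sum_normSq_sum_mul_pow (fun k => (k : ℂ))
  simp only [Complex.normSq_natCast, ← sq] at hparseval
  rw [sum_congr rfl hterm, ← sum_div, hsplit, hparseval, hV0, Complex.normSq_ofReal,
    sum_range_cast_sq, sum_range_cast_id]
  field_simp
  ring

theorem sum_range_inv_add_inv_sub_two_mul_cos {w : ℝ} (hw : 1 < w) {M : ℕ} (hM : 0 < M) :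
    ∑ j ∈ range M, 1 / (w + w⁻¹ - 2 * cos (2 * π * j / M)) =
      M * (w ^ M + 1) / ((w - w⁻¹) * (w ^ M - 1)) := by
  set ζ := Complex.exp (2 * π * Complex.I / M)
  have hζ : IsPrimitiveRoot ζ M := Complex.isPrimitiveRoot_exp M hM.ne'
  -- `V j = (w ^ M - 1) / (w - ζ ^ j)`, expanded as a geometric sum
  set V : ℕ → ℂ := fun j => ∑ k ∈ range M, ((w ^ (M - 1 - k) : ℝ) : ℂ) * ζ ^ (j * k)
  have hwM : 0 < w ^ M - 1 := sub_pos.mpr (one_lt_pow₀ hw hM.ne')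
  have hterm (j : ℕ) : 1 / (w + w⁻¹ - 2 * cos (2 * π * j / M)) =
      w * normSq (V j) / (w ^ M - 1) ^ 2 := by
    have hxM : (ζ ^ j) ^ M = 1 := by rw [← pow_mul, mul_comm, pow_mul, hζ.pow_eq_one, one_pow]
    have hV : ((w : ℂ) - ζ ^ j) * V j = ((w ^ M - 1 : ℝ) : ℂ) := by
      have := geom_sum₂_mul (ζ ^ j) (w : ℂ) M
      rw [hxM] at this
      have hVj : V j = ∑ k ∈ range M, (ζ ^ j) ^ k * (w : ℂ) ^ (M - 1 - k) :=
        sum_congr rfl fun k _ => by push_cast; ring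
      rw [hVj]
      push_cast
      linear_combination -this
    have hprod : normSq ((w : ℂ) - ζ ^ j) * normSq (V j) = (w ^ M - 1) ^ 2 := by
      rw [← Complex.normSq_mul, hV, Complex.normSq_ofReal, sq]
    have hne : normSq ((w : ℂ) - ζ ^ j) ≠ 0 := fun h => by
      rw [h, zero_mul] at hprod
      exact (pow_pos hwM 2).ne hprod
    have hden : w + w⁻¹ - 2 * cos (2 * π * j / M) = normSq ((w : ℂ) - ζ ^ j) / w := by
      rw [normSq_ofReal_sub_exp_pow]
      field_simp
      ring
    rw [hden, one_div_div, div_eq_div_iff hne (by positivity), ← hprod]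
    ring
  have hgeom : ∑ k ∈ range M, (w ^ (M - 1 - k)) ^ 2 = ((w ^ 2) ^ M - 1) / (w ^ 2 - 1) := by
    rw [sum_range_reflect (fun k => (w ^ k) ^ 2) M, ← geom_sum_eq (by nlinarith)]
    simp_rw [← pow_mul, mul_comm]
  have hparseval := hζ.sum_normSq_sum_mul_pow (fun k => ((w ^ (M - 1 - k) : ℝ) : ℂ))
  simp only [Complex.normSq_ofReal, ← sq] at hparseval
  rw [sum_congr rfl fun j _ => hterm j, ← sum_div, ← mul_sum, hparseval, hgeom]
  field_simp
  ring

theorem exists_one_lt_sub_inv_eq {s : ℝ} (hs : 0 < s) : ∃ u : ℝ, 1 < u ∧ u - u⁻¹ = s := by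
  refine ⟨exp (arsinh (s / 2)), one_lt_exp_iff.mpr (arsinh_pos_iff.mpr (by positivity)), ?_⟩
  have := sinh_arsinh (s / 2)
  rw [sinh_eq] at this
  rw [← exp_neg]
  linarith

theorem sum_range_inv_sq_add_cycleEigenvalue_le {s : ℝ} (hs : 0 < s) {M : ℕ} (hM : 0 < M) :
    ∑ j ∈ range M, 1 / (s ^ 2 + cycleEigenvalue M j) ≤ M / (2 * s) + 1 / s ^ 2 := by
  obtain ⟨u, hu, rfl⟩ := exists_one_lt_sub_inv_eq hs
  have hu0 : 0 < u := by linarith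
  set w := u ^ 2
  have hw : 1 < w := one_lt_pow₀ hu two_ne_zero
  have hshift (j : ℕ) :
      (u - u⁻¹) ^ 2 + cycleEigenvalue M j = w + w⁻¹ - 2 * cos (2 * π * j / M) := by
    rw [cycleEigenvalue]
    field_simp
    ring
  have hgap : 2 * (u - u⁻¹) ≤ w - w⁻¹ := by
    have hAM : 2 ≤ u + u⁻¹ := by
      rw [← sub_nonneg, show u + u⁻¹ - 2 = (u - 1) ^ 2 / u by field_simp; ring]
      positivity
    rw [show w - w⁻¹ = (u - u⁻¹) * (u + u⁻¹) by field_simp; ring, mul_comm]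
    exact mul_le_mul_of_nonneg_left hAM hs.le
  have hbern : M * (u - u⁻¹) ≤ w ^ M - 1 := by
    have hstep : u - u⁻¹ ≤ w - 1 := by
      rw [show w - 1 = u * (u - u⁻¹) by field_simp; ring]
      exact le_mul_of_one_le_left hs.le hu.le
    have := one_add_mul_le_pow (a := w - 1) (by linarith) M
    rw [add_sub_cancel] at this
    nlinarith [(Nat.cast_nonneg M : (0 : ℝ) ≤ M)]
  rw [sum_congr rfl fun j _ => by rw [hshift j], sum_range_inv_add_inv_sub_two_mul_cos hw hM]
  have hMpos : (0 : ℝ) < M := Nat.cast_pos.mpr hM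
  have hg : 0 < w - w⁻¹ := by linarith
  have hd : 0 < w ^ M - 1 := by nlinarith
  calc M * (w ^ M + 1) / ((w - w⁻¹) * (w ^ M - 1))
      = M / (w - w⁻¹) + 2 * M / ((w - w⁻¹) * (w ^ M - 1)) := by
        field_simp
        ring
    _ ≤ M / (2 * (u - u⁻¹)) + 2 * M / ((2 * (u - u⁻¹)) * (M * (u - u⁻¹))) := by
        gcongr
    _ = M / (2 * (u - u⁻¹)) + 1 / (u - u⁻¹) ^ 2 := by
        field_simp

theorem one_div_sin_le_one_div_add_one {t : ℝ} (h0 : 0 < t) (h2 : t ≤ 2) :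
    1 / sin t ≤ 1 / t + 1 := by
  have hsin := sin_ge_sub_cube h0.le
  have hcubic : 0 < t - t ^ 3 / 6 := by nlinarith [mul_le_mul_of_nonneg_left h2 h0.le]
  have hkey : t ≤ (1 + t) * sin t := by
    nlinarith [mul_nonneg (sq_nonneg t) (show 0 ≤ 6 - t - t ^ 2 by nlinarith)]
  rw [div_add_one h0.ne', div_le_div_iff₀ (by linarith) h0]
  linarith

theorem one_div_sin_pi_mul_div_le {n i : ℕ} (hi : 0 < i) (hin : i < n) :
    1 / sin (π * i / n) ≤ n / (π * i) + n / (π * (n - i)) + 1 := by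
  have hi' : (0 : ℝ) < i := Nat.cast_pos.mpr hi
  have hin' : (i : ℝ) < n := Nat.cast_lt.mpr hin
  have hni : (0 : ℝ) < n - i := sub_pos.mpr hin'
  have hn : (0 : ℝ) < n := by linarith
  have hhalf {k : ℝ} (hk : 0 < k) (h2k : 2 * k ≤ n) : 1 / sin (π * k / n) ≤ n / (π * k) + 1 := by
    have := one_div_sin_le_one_div_add_one (t := π * k / n) (by positivity) (by
      rw [div_le_iff₀ (by linarith)]
      nlinarith [pi_lt_four])
    rwa [one_div_div] at this
  rcases le_total (2 * (i : ℝ)) n with h | h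
  · have := hhalf hi' h
    have : 0 ≤ n / (π * (n - i)) := by positivity
    linarith
  · have := hhalf hni (by linarith)
    rw [show π * (n - i) / n = π - π * i / n by field_simp, sin_pi_sub] at this
    have : 0 ≤ n / (π * i) := by positivity
    linarith

theorem sum_Ico_inv_le_one_add_log (n : ℕ) : ∑ i ∈ Ico 1 n, (i : ℝ)⁻¹ ≤ 1 + log n :=
  calc ∑ i ∈ Ico 1 n, (i : ℝ)⁻¹ ≤ ∑ i ∈ Icc 1 n, (i : ℝ)⁻¹ :=
        sum_le_sum_of_subset_of_nonneg Ico_subset_Icc_self fun _ _ _ => by positivity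
    _ = harmonic n := by simp [harmonic_eq_sum_Icc]
    _ ≤ 1 + log n := harmonic_le_one_add_log n

theorem sum_Ico_one_div_sin_le (n : ℕ) :
    ∑ i ∈ Ico 1 n, 1 / sin (π * i / n) ≤ 2 * n / π * (1 + log n) + n := by
  have hreflect : ∑ i ∈ Ico 1 n, ((n : ℝ) - i)⁻¹ = ∑ i ∈ Ico 1 n, (i : ℝ)⁻¹ := by
    have h := sum_Ico_reflect (fun i : ℕ => (i : ℝ)⁻¹) 1 (Nat.le_succ n)
    rw [Nat.add_sub_cancel_left, Nat.add_sub_cancel] at h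
    rw [← h]
    refine sum_congr rfl fun i hi => ?_
    rw [Nat.cast_sub (mem_Ico.mp hi).2.le]
  have hcard : ((Ico 1 n).card : ℝ) ≤ n := by
    rw [Nat.card_Ico]
    exact_mod_cast Nat.sub_le n 1
  calc ∑ i ∈ Ico 1 n, 1 / sin (π * i / n)
      ≤ ∑ i ∈ Ico 1 n, (n / π * ((i : ℝ)⁻¹ + ((n : ℝ) - i)⁻¹) + 1) := by
        refine sum_le_sum fun i hi => ?_
        exact (one_div_sin_pi_mul_div_le (mem_Ico.mp hi).1 (mem_Ico.mp hi).2).trans_eq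
          (by simp only [div_eq_mul_inv, mul_inv]; ring)
    _ = n / π * (2 * ∑ i ∈ Ico 1 n, (i : ℝ)⁻¹) + (Ico 1 n).card := by
        rw [sum_add_distrib, ← mul_sum, sum_add_distrib, hreflect, sum_const, nsmul_one, two_mul]
    _ ≤ n / π * (2 * (1 + log n)) + n := by
        gcongr
        exact sum_Ico_inv_le_one_add_log n
    _ = 2 * n / π * (1 + log n) + n := by ring

theorem cycleEigenvalue_eq_sq_sin (M j : ℕ) : cycleEigenvalue M j = (2 * sin (π * j / M)) ^ 2 := by
  rw [cycleEigenvalue, show 2 * π * j / M = 2 * (π * j / M) by ring, cos_two_mul]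
  linear_combination (-4) * sin_sq_add_cos_sq (π * j / M)

theorem sum_range_inv_cycleEigenvalue_add_le {M1 M2 i : ℕ} (hi : 0 < i) (hiM : i < M1)
    (hM2 : 0 < M2) :
    ∑ j ∈ range M2, 1 / (cycleEigenvalue M1 i + cycleEigenvalue M2 j) ≤
      M2 / (4 * sin (π * i / M1)) + 1 / cycleEigenvalue M1 i := by
  have hsin : 0 < sin (π * i / M1) := by
    have hi' : (0 : ℝ) < i := Nat.cast_pos.mpr hi
    have hiM' : (i : ℝ) < M1 := Nat.cast_lt.mpr hiM
    apply sin_pos_of_pos_of_lt_pi (div_pos (mul_pos pi_pos hi') (by linarith))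
    rw [div_lt_iff₀ (by linarith)]
    nlinarith [pi_pos]
  have := sum_range_inv_sq_add_cycleEigenvalue_le (by positivity : 0 < 2 * sin (π * i / M1)) hM2
  rw [cycleEigenvalue_eq_sq_sin M1 i]
  convert this using 2
  ring

theorem sum_Ico_sum_range_inv_cycleEigenvalue_add_le {M1 M2 : ℕ} (hM1 : 0 < M1) (hM2 : 0 < M2) :
    ∑ i ∈ Ico 1 M1, ∑ j ∈ range M2, 1 / (cycleEigenvalue M1 i + cycleEigenvalue M2 j) ≤
      M1 * M2 * (1 + log M1) / (2 * π) + M1 * M2 / 4 + ((M1 : ℝ) ^ 2 - 1) / 12 :=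
  calc ∑ i ∈ Ico 1 M1, ∑ j ∈ range M2, 1 / (cycleEigenvalue M1 i + cycleEigenvalue M2 j)
      ≤ ∑ i ∈ Ico 1 M1, (M2 / 4 * (1 / sin (π * i / M1)) + 1 / cycleEigenvalue M1 i) :=
        sum_le_sum fun i hi => (sum_range_inv_cycleEigenvalue_add_le (mem_Ico.mp hi).1
          (mem_Ico.mp hi).2 hM2).trans_eq (by ring)
    _ = M2 / 4 * ∑ i ∈ Ico 1 M1, 1 / sin (π * i / M1) + ((M1 : ℝ) ^ 2 - 1) / 12 := by
        rw [sum_add_distrib, ← mul_sum, sum_Ico_inv_cycleEigenvalue hM1]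
    _ ≤ M2 / 4 * (2 * M1 / π * (1 + log M1) + M1) + ((M1 : ℝ) ^ 2 - 1) / 12 := by
        gcongr
        exact sum_Ico_one_div_sin_le M1
    _ = M1 * M2 * (1 + log M1) / (2 * π) + M1 * M2 / 4 + ((M1 : ℝ) ^ 2 - 1) / 12 := by
        field_simp
        ring

theorem Rave2_eq_sum_cycleEigenvalue {M1 M2 : ℕ} (hM1 : 0 < M1) (hM2 : 0 < M2) :
    Rave2 M1 M2 = (∑ j ∈ Ico 1 M2, 1 / cycleEigenvalue M2 j +
      ∑ i ∈ Ico 1 M1, ∑ j ∈ range M2, 1 / (cycleEigenvalue M1 i + cycleEigenvalue M2 j)) /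
        (M1 * M2) := by
  rw [Rave2, one_div_mul_eq_div, range_eq_Ico, sum_eq_sum_Ico_succ_bot hM1]
  congr 2
  · rw [range_eq_Ico, sum_eq_sum_Ico_succ_bot hM2]
    refine (zero_add _).trans (sum_congr rfl fun j hj => ?_)
    rw [if_neg (fun h => by have := (mem_Ico.mp hj).1; omega), cycleEigenvalue]
    norm_num
  · refine sum_congr rfl fun i hi => sum_congr rfl fun j _ => ?_
    rw [if_neg (fun h => by have := (mem_Ico.mp hi).1; omega), cycleEigenvalue, cycleEigenvalue]
    ring_nf

theorem torus2_upper (M1 M2 : ℕ) (h1 : 4 ≤ M1) (h12 : M1 ≤ M2) :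
    Rave2 M1 M2 ≤ (1 / (2 * Real.pi)) * Real.log M2 + (1 / 12) * ((M2 : ℝ) / M1) + 1 := by
  have hM1 : 0 < M1 := by omega
  have hM2 : 0 < M2 := by omega
  have hM : (M1 : ℝ) ≤ M2 := by exact_mod_cast h12
  have hlog : log M1 ≤ log M2 := log_le_log (by positivity) hM
  rw [Rave2_eq_sum_cycleEigenvalue hM1 hM2, sum_Ico_inv_cycleEigenvalue hM2,
    div_le_iff₀ (by positivity)]
  refine (add_le_add_right (sum_Ico_sum_range_inv_cycleEigenvalue_add_le hM1 hM2) _).trans ?_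
  have hlogterm :
      M1 * M2 * (1 + log M1) / (2 * π) ≤ M1 * M2 / (2 * π) + M1 * M2 * log M2 / (2 * π) := by
    rw [← add_div, ← mul_one_add]
    gcongr
  have hpi : (M1 * M2 : ℝ) / (2 * π) ≤ M1 * M2 / 6 := by
    gcongr
    linarith [pi_gt_three]
  have hsq : (M1 : ℝ) ^ 2 ≤ M1 * M2 := by nlinarith
  have harea : (0 : ℝ) ≤ M1 * M2 := by positivity
  rw [show (1 / (2 * π) * log M2 + 1 / 12 * ((M2 : ℝ) / M1) + 1) * (M1 * M2) =
    M1 * M2 * log M2 / (2 * π) + (M2 : ℝ) ^ 2 / 12 + M1 * M2 by field_simp]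
  linarith
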